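/- Fix λ ∈ (0,1) and ρ ∈ (0,1) with λ ≤ ρ. Then (1/2)·log((2πe)²) − ((1+λ)/2)·log((2πe)²(1−ρ²)) evaluated as f(1, ρ) satisfies f(1, ρ) ≥ (1/2)·log(1/(1−λ²)) − (λ/2)·log((2πe)²(1−ρ)²(1+λ)/(1−λ)), where f(s,q) = (1/2)·log((2πe)²s²) − ((1+λ)/2)·log((2πe)²s²(1−q²)). -/

import Mathlib

open Real

noncomputable def f12 (lam s q : ℝ) : ℝ :=
  (1/2) * Real.log ((2*π*Real.exp 1)^2 * s^2)
    - ((1+lam)/2) * Real.log ((2*π*Real.exp 1)^2 * s^2 * (1 - q^2))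

/-!
After expanding the logarithms, the difference of the two sides is
`-(1/2) * ((1 - λ) log ((1 - ρ)/(1 - λ)) + (1 + λ) log ((1 + ρ)/(1 + λ)))`, the Kullback–Leibler
divergence of the two-point distribution `((1 - ρ)/2, (1 + ρ)/2)` from `((1 - λ)/2, (1 + λ)/2)`.
It is nonnegative by Gibbs' inequality, termwise from `w log (q / w) ≤ q - w`.
-/

theorem mul_log_div_le_sub {w q : ℝ} (hw : 0 < w) (hq : 0 < q) : w * log (q / w) ≤ q - w :=
  calc w * log (q / w) ≤ w * (q / w - 1) :=
        mul_le_mul_of_nonneg_left (log_le_sub_one_of_pos (div_pos hq hw)) hw.le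
    _ = q - w := by field_simp

theorem mul_log_div_add_mul_log_div_nonpos {w₁ w₂ q₁ q₂ : ℝ} (hw₁ : 0 < w₁) (hw₂ : 0 < w₂)
    (hq₁ : 0 < q₁) (hq₂ : 0 < q₂) (hsum : w₁ + w₂ = q₁ + q₂) :
    w₁ * log (q₁ / w₁) + w₂ * log (q₂ / w₂) ≤ 0 := by
  linarith [mul_log_div_le_sub hw₁ hq₁, mul_log_div_le_sub hw₂ hq₂]

theorem f12_one_sub_eq {lam ρ : ℝ} (hlam : |lam| < 1) (hρ : |ρ| < 1) :
    f12 lam 1 ρ - ((1/2) * log (1/(1-lam^2))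
      - (lam/2) * log ((2*π*exp 1)^2 * (1-ρ)^2 * (1+lam)/(1-lam))) =
    -(1/2) * ((1 - lam) * log ((1 - ρ) / (1 - lam)) + (1 + lam) * log ((1 + ρ) / (1 + lam))) := by
  obtain ⟨hl₁, hl₂⟩ := abs_lt.mp hlam
  obtain ⟨hr₁, hr₂⟩ := abs_lt.mp hρ
  have hlm : 1 - lam ≠ 0 := by linarith
  have hlp : 1 + lam ≠ 0 := by linarith
  have hrm : 1 - ρ ≠ 0 := by linarith
  have hrp : 1 + ρ ≠ 0 := by linarith
  set K := 2*π*exp 1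
  have hK : K ^ 2 ≠ 0 := by positivity
  have e₁ : log (K^2 * 1^2) = 2 * log K := by rw [one_pow, mul_one, log_pow]; norm_num
  have e₂ : log (K^2 * 1^2 * (1 - ρ^2)) = 2 * log K + log (1 - ρ) + log (1 + ρ) := by
    rw [show K^2 * 1^2 * (1 - ρ^2) = K^2 * ((1 - ρ) * (1 + ρ)) by ring,
      log_mul hK (mul_ne_zero hrm hrp), log_mul hrm hrp, log_pow]
    push_cast; ring
  have e₃ : log (1 / (1 - lam^2)) = -(log (1 - lam) + log (1 + lam)) := by
    rw [show 1 / (1 - lam^2) = ((1 - lam) * (1 + lam))⁻¹ by ring, log_inv, log_mul hlm hlp]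
  have e₄ : log (K^2 * (1-ρ)^2 * (1+lam) / (1-lam)) =
      2 * log K + 2 * log (1 - ρ) + log (1 + lam) - log (1 - lam) := by
    rw [log_div (by positivity) hlm, log_mul (by positivity) hlp, log_mul hK (by positivity),
      log_pow, log_pow]
    push_cast; ring
  unfold f12
  rw [e₁, e₂, e₃, e₄, log_div hrm hlm, log_div hrp hlp]
  ring

theorem stmt_12_general (lam ρ : ℝ) (hlam : lam ∈ Set.Ioo (0:ℝ) 1) (hρ : ρ ∈ Set.Ioo (0:ℝ) 1) :
    f12 lam 1 ρ ≥ (1/2) * Real.log (1/(1-lam^2))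
      - (lam/2) * Real.log ((2*π*Real.exp 1)^2 * (1-ρ)^2 * (1+lam)/(1-lam)) := by
  obtain ⟨hl₀, hl₁⟩ := hlam
  obtain ⟨hr₀, hr₁⟩ := hρ
  have hgibbs := mul_log_div_add_mul_log_div_nonpos (w₁ := 1 - lam) (w₂ := 1 + lam)
    (q₁ := 1 - ρ) (q₂ := 1 + ρ) (by linarith) (by linarith) (by linarith) (by linarith) (by ring)
  have hdiff := f12_one_sub_eq (lam := lam) (ρ := ρ) (abs_lt.mpr ⟨by linarith, hl₁⟩)
    (abs_lt.mpr ⟨by linarith, hr₁⟩)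
  linarith

theorem stmt_12 (lam ρ : ℝ) (hlam : lam ∈ Set.Ioo (0:ℝ) 1) (hρ : ρ ∈ Set.Ioo (0:ℝ) 1)
    (hlr : lam ≤ ρ) :
    f12 lam 1 ρ ≥ (1/2) * Real.log (1/(1-lam^2))
      - (lam/2) * Real.log ((2*π*Real.exp 1)^2 * (1-ρ)^2 * (1+lam)/(1-lam)) :=
  stmt_12_general lam ρ hlam hρ
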